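/- (Proposition 2) Let N_sub, N_s be positive integers, N = N_sub · N_s, let M = I_{N_sub} ⊗ 1_{N_s} be the mask matrix, and let U_S^V, U_S^K, U_D^V, U_D^K be J × J real matrices. Define the nested attention (NATT) map on J × N real matrices by C(D) = U_S^V D ((U_S^K D)^T D ⊙ M) + U_D^V D (U_D^K D)^T D. Then C satisfies the nested 1D-PE property: for every nested permutation matrix Ω = (Π_sub ⊗ I_{N_s}) · diag(Π_1, …, Π_{N_sub}) and every J × N matrix D, C(D Ω) = C(D) Ω. -/
import Mathlib


open Matrix
open scoped Kronecker

noncomputable section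

/-- The permutation matrix of a permutation `σ`: entry `(i, j)` is `1` iff `σ i = j`. -/
def permMatrix {I : Type*} [DecidableEq I] (σ : Equiv.Perm I) : Matrix I I ℝ :=
  Matrix.of fun i j => if σ i = j then 1 else 0

/-- The block-diagonal matrix `diag(B 0, …, B (Nsub - 1))`, indexed by
`Fin Nsub × Fin Ns` (block index first). -/
def blockDiag {Nsub Ns : ℕ} (B : Fin Nsub → Matrix (Fin Ns) (Fin Ns) ℝ) :
    Matrix (Fin Nsub × Fin Ns) (Fin Nsub × Fin Ns) ℝ :=
  Matrix.of fun p q => if p.1 = q.1 then B p.1 p.2 q.2 else 0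

/-- The nested permutation matrix `Ω = (Π_sub ⊗ I_{N_s}) · diag(Π_1, …, Π_{N_sub})`. -/
def nestedPermMatrix {Nsub Ns : ℕ} (σsub : Equiv.Perm (Fin Nsub))
    (σs : Fin Nsub → Equiv.Perm (Fin Ns)) :
    Matrix (Fin Nsub × Fin Ns) (Fin Nsub × Fin Ns) ℝ :=
  (permMatrix σsub ⊗ₖ (1 : Matrix (Fin Ns) (Fin Ns) ℝ)) *
    blockDiag (fun k => permMatrix (σs k))

/-- The mask matrix `M = I_{N_sub} ⊗ 1_{N_s}`, where `1_{N_s}` is the all-ones matrix. -/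
def maskMatrix (Nsub Ns : ℕ) : Matrix (Fin Nsub × Fin Ns) (Fin Nsub × Fin Ns) ℝ :=
  (1 : Matrix (Fin Nsub) (Fin Nsub) ℝ) ⊗ₖ (Matrix.of fun _ _ => (1 : ℝ))

/-- The nested attention (NATT) map
`C(D) = U_S^V D ((U_S^K D)ᵀ D ⊙ M) + U_D^V D (U_D^K D)ᵀ D`. -/
def nestedAtt {J Nsub Ns : ℕ} (USV USK UDV UDK : Matrix (Fin J) (Fin J) ℝ)
    (D : Matrix (Fin J) (Fin Nsub × Fin Ns) ℝ) : Matrix (Fin J) (Fin Nsub × Fin Ns) ℝ :=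
  USV * D * (((USK * D)ᵀ * D) ⊙ maskMatrix Nsub Ns) + UDV * D * ((UDK * D)ᵀ * D)


/-- The nested permutation as an `Equiv.Perm`. -/
def nestedPerm {Nsub Ns : ℕ} (σsub : Equiv.Perm (Fin Nsub))
    (σs : Fin Nsub → Equiv.Perm (Fin Ns)) : Equiv.Perm (Fin Nsub × Fin Ns) where
  toFun p := (σsub p.1, σs (σsub p.1) p.2)
  invFun p := (σsub.symm p.1, (σs p.1).symm p.2)
  left_inv p := by simp
  right_inv p := by simp

lemma nestedPermMatrix_eq {Nsub Ns : ℕ} (σsub : Equiv.Perm (Fin Nsub))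
    (σs : Fin Nsub → Equiv.Perm (Fin Ns)) :
    nestedPermMatrix σsub σs = permMatrix (nestedPerm σsub σs) := by
  ext ⟨k, s⟩ ⟨l, t⟩
  simp only [nestedPermMatrix, permMatrix, _root_.blockDiag, Matrix.mul_apply,
    Matrix.kroneckerMap_apply, Matrix.one_apply, Matrix.of_apply, nestedPerm,
    Equiv.coe_fn_mk, Prod.mk.injEq, Fintype.sum_prod_type]
  rw [Finset.sum_eq_single (σsub k)]
  · rw [Finset.sum_eq_single s]
    · by_cases h1 : σsub k = l
      · subst h1; simp
      · simp [h1, Ne.symm h1]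
    · intro u _ hu
      simp [Ne.symm hu]
    · simp
  · intro m _ hm
    simp [Ne.symm hm]
  · simp

lemma mul_permMatrix_apply {K I : Type*} [DecidableEq I] [Fintype I]
    (A : Matrix K I ℝ) (τ : Equiv.Perm I) (i : K) (j : I) :
    (A * permMatrix τ) i j = A i (τ.symm j) := by
  simp only [Matrix.mul_apply, permMatrix, Matrix.of_apply]
  rw [Finset.sum_eq_single (τ.symm j)]
  · simp
  · intro r _ hr
    have : τ r ≠ j := fun h => hr (by simp [← h])
    simp [this]
  · simp

lemma permMatrix_transpose_mul_apply {K I : Type*} [DecidableEq I] [Fintype I]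
    (A : Matrix I K ℝ) (τ : Equiv.Perm I) (i : I) (j : K) :
    ((permMatrix τ)ᵀ * A) i j = A (τ.symm i) j := by
  simp only [Matrix.mul_apply, permMatrix, Matrix.transpose_apply, Matrix.of_apply]
  rw [Finset.sum_eq_single (τ.symm i)]
  · simp
  · intro r _ hr
    have : τ r ≠ i := fun h => hr (by simp [← h])
    simp [this]
  · simp

lemma permMatrix_mul_transpose {I : Type*} [DecidableEq I] [Fintype I]
    (τ : Equiv.Perm I) : permMatrix τ * (permMatrix τ)ᵀ = 1 := by
  ext i j
  simp only [Matrix.mul_apply, permMatrix, Matrix.transpose_apply, Matrix.of_apply,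
    Matrix.one_apply, ite_mul, one_mul, zero_mul]
  rw [Finset.sum_eq_single (τ i)]
  · by_cases h : i = j <;> simp [h, τ.injective.eq_iff, eq_comm]
  · intro r _ hr; simp [Ne.symm hr]
  · simp

lemma mask_conj {Nsub Ns : ℕ} (σsub : Equiv.Perm (Fin Nsub))
    (σs : Fin Nsub → Equiv.Perm (Fin Ns))
    (A : Matrix (Fin Nsub × Fin Ns) (Fin Nsub × Fin Ns) ℝ) :
    ((permMatrix (nestedPerm σsub σs))ᵀ * A * permMatrix (nestedPerm σsub σs))
        ⊙ maskMatrix Nsub Ns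
      = (permMatrix (nestedPerm σsub σs))ᵀ * (A ⊙ maskMatrix Nsub Ns)
          * permMatrix (nestedPerm σsub σs) := by
  set τ := nestedPerm σsub σs
  ext p q
  rw [Matrix.hadamard_apply, mul_permMatrix_apply, mul_permMatrix_apply,
    permMatrix_transpose_mul_apply, permMatrix_transpose_mul_apply,
    Matrix.hadamard_apply]
  have hmask : maskMatrix Nsub Ns (τ.symm p) (τ.symm q) = maskMatrix Nsub Ns p q := by
    simp only [maskMatrix, Matrix.kroneckerMap_apply, Matrix.one_apply, Matrix.of_apply]
    have h1 : (τ.symm p).1 = σsub.symm p.1 := rfl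
    have h2 : (τ.symm q).1 = σsub.symm q.1 := rfl
    rw [h1, h2]
    by_cases h : p.1 = q.1
    · simp [h]
    · have : σsub.symm p.1 ≠ σsub.symm q.1 := fun hc => h (σsub.symm.injective hc)
      simp [h, this]
  rw [hmask]

/-- Proposition 2: the nested attention map satisfies the nested 1D-PE property. -/
theorem nestedAtt_nestedOnePE {J Nsub Ns : ℕ} (hNsub : 0 < Nsub) (hNs : 0 < Ns)
    (USV USK UDV UDK : Matrix (Fin J) (Fin J) ℝ)
    (σsub : Equiv.Perm (Fin Nsub)) (σs : Fin Nsub → Equiv.Perm (Fin Ns))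
    (D : Matrix (Fin J) (Fin Nsub × Fin Ns) ℝ) :
    nestedAtt USV USK UDV UDK (D * nestedPermMatrix σsub σs)
      = nestedAtt USV USK UDV UDK D * nestedPermMatrix σsub σs := by
  rw [nestedPermMatrix_eq]
  have hPP : permMatrix (nestedPerm σsub σs) * (permMatrix (nestedPerm σsub σs))ᵀ = 1 :=
    permMatrix_mul_transpose _
  have hmask := mask_conj σsub σs (((USK * D)ᵀ * D))
  set P := permMatrix (nestedPerm σsub σs) with hP
  have key : ∀ (U : Matrix (Fin J) (Fin J) ℝ),
      (U * (D * P))ᵀ * (D * P) = Pᵀ * ((U * D)ᵀ * D) * P := by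
    intro U
    rw [← Matrix.mul_assoc U D P, Matrix.transpose_mul]
    simp only [Matrix.mul_assoc]
  have cancel : ∀ (A : Matrix (Fin Nsub × Fin Ns) (Fin Nsub × Fin Ns) ℝ)
      (U : Matrix (Fin J) (Fin J) ℝ),
      U * (D * P) * (Pᵀ * A * P) = U * D * A * P := by
    intro A U
    simp only [Matrix.mul_assoc]
    rw [← Matrix.mul_assoc P Pᵀ, hPP, Matrix.one_mul]
  unfold nestedAtt
  rw [key USK, key UDK, hmask, cancel, cancel, Matrix.add_mul]
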